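/- For positive integers i < j ≤ r with r the number of vertices of a component F_1 of a tiered forest (vertices x_1 < ... < x_r), the edge x_i x_j belongs to E(CT(F)) \ E(F_1) if and only if x_{r+1−i} x_{r+1−j} belongs to E(CT(F')) \ E(F'_1), where F'_1 is the dual of F_1. -/

import Mathlib

/-!
The componentwise flip `compFlip` is an involution of the vertex set that reverses the order
inside each component, and the dual has tier `3 - t` at the flipped vertex. Hence it carries
the pairs `u < v` of a component with `u` in tier 1 and `v` in tier 2 bijectively onto the
corresponding pairs of the dual, and, being injective, it carries the edges of `F` exactly onto
the edges of `F'`.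
-/

open Finset

attribute [local instance 10] Classical.propDecidable

noncomputable section

/-- An edge of a simple graph on `ℕ`, stored as an ordered pair `(u,v)` with `u < v` intended. -/
abbrev PEdge : Type := ℕ × ℕ

/-- A labelled edge (for multigraphs): an endpoint pair together with a label. -/
abbrev LEdge : Type := (ℕ × ℕ) × ℕ

def adjP (E : Finset PEdge) (u v : ℕ) : Prop := (u, v) ∈ E ∨ (v, u) ∈ E

def reachP (E : Finset PEdge) : ℕ → ℕ → Prop := Relation.ReflTransGen (adjP E)

def connP (V : Finset ℕ) (E : Finset PEdge) : Prop :=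
  (∀ e ∈ E, e.1 ∈ V ∧ e.2 ∈ V) ∧ ∀ u ∈ V, ∀ v ∈ V, reachP E u v

def IsTreeOn (V : Finset ℕ) (E : Finset PEdge) : Prop := connP V E ∧ E.card + 1 = V.card

/-- A graph on a finite set of naturals together with a tiering map. -/
structure PreGraph where
  V : Finset ℕ
  E : Finset PEdge
  t : ℕ → ℕ

/-- `G` is a tiered graph with two tiers. -/
def IsTiered (G : PreGraph) : Prop :=
  (∀ v ∈ G.V, 0 < v) ∧
  (∀ e ∈ G.E, e.1 ∈ G.V ∧ e.2 ∈ G.V ∧ e.1 < e.2) ∧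
  (∀ v ∈ G.V, G.t v = 1 ∨ G.t v = 2) ∧
  (∀ e ∈ G.E, G.t e.1 < G.t e.2)

/-- acyclicity: every edge is a bridge. -/
def IsForest (G : PreGraph) : Prop := ∀ e ∈ G.E, ¬ reachP (G.E.erase e) e.1 e.2

def IsTreeG (G : PreGraph) : Prop := IsTreeOn G.V G.E

/-- the connected component (vertex set) of `x`. -/
def comp (V : Finset ℕ) (E : Finset PEdge) (x : ℕ) : Finset ℕ :=
  V.filter fun y => reachP E x y

/-- the order-reversing involution `x_i ↦ x_{s+1-i}` of a finite set `V = {x_1 < ... < x_s}`. -/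
def flipMap (V : Finset ℕ) (x : ℕ) : ℕ :=
  if hx : x ∈ V then
    ((V.orderIsoOfFin rfl)
      ⟨V.card - 1 - ((V.orderIsoOfFin rfl).symm ⟨x, hx⟩).1, by
        have h := ((V.orderIsoOfFin rfl).symm ⟨x, hx⟩).isLt; omega⟩).1
  else x

/-- the dual of a (connected) tiered graph, via the global vertex ordering. -/
def dual (G : PreGraph) : PreGraph where
  V := G.V
  E := G.E.image fun e => (flipMap G.V e.2, flipMap G.V e.1)
  t := fun x => if x ∈ G.V then 3 - G.t (flipMap G.V x) else G.t x

/-- the componentwise dual of a (possibly disconnected) tiered graph. -/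
def cdual (G : PreGraph) : PreGraph where
  V := G.V
  E := G.E.image fun e => (flipMap (comp G.V G.E e.1) e.2, flipMap (comp G.V G.E e.1) e.1)
  t := fun x => if x ∈ G.V then 3 - G.t (flipMap (comp G.V G.E x) x) else G.t x

/-- the recursive weight of a tiered tree (fuel-based implementation; the recursion
depth is bounded by the number of vertices). -/
def weightAux : ℕ → PreGraph → ℕ
  | 0, _ => 0
  | fuel + 1, T =>
    if h : 2 ≤ T.V.card then
      let v := T.V.min' (Finset.card_pos.mp (by omega))
      let V' := T.V.erase v
      let E' := T.E.filter fun e => e.1 ≠ v ∧ e.2 ≠ v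
      ∑ u ∈ V'.filter (fun u => adjP T.E v u),
        (((comp V' E' u).filter fun y => y < u ∧ T.t v < T.t y).card
          + weightAux fuel ⟨comp V' E' u, E'.filter fun e => e.1 ∈ comp V' E' u, T.t⟩)
    else 0

def weight (T : PreGraph) : ℕ := weightAux T.V.card T

/-- edges of a complete tiered graph with tier 1 vertex set `A` and tier 2 vertex set `B`. -/
def ctE2 (A B : Finset ℕ) : Finset PEdge := (A ×ˢ B).filter fun e => e.1 < e.2

/-- the edge set of the complete tiered graph determined by a two-tier tiered graph `G`. -/
def ctE (G : PreGraph) : Finset PEdge :=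
  ctE2 (G.V.filter fun v => G.t v = 1) (G.V.filter fun v => G.t v = 2)

/-- edge set of the complete tiered graph on `[n]` determined by a tiering map `t`. -/
def ctEM (n : ℕ) (t : ℕ → ℕ) : Finset PEdge :=
  (Finset.Icc 1 n ×ˢ Finset.Icc 1 n).filter fun e => e.1 < e.2 ∧ t e.1 < t e.2

def extActiveP (T : Finset PEdge) (ω : PEdge → ℝ) (e : PEdge) : Prop :=
  e ∉ T ∧ reachP T e.1 e.2 ∧ ∀ e' ∈ T, ¬ reachP (T.erase e') e.1 e.2 → ω e < ω e'

/-- external activity of the spanning forest `T` in the graph with edge set `E`. -/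
def eaP (E T : Finset PEdge) (ω : PEdge → ℝ) : ℕ := (E.filter (extActiveP T ω)).card

def adjL (E : Finset LEdge) (u v : ℕ) : Prop := ∃ e ∈ E, e.1 = (u, v) ∨ e.1 = (v, u)
def reachL (E : Finset LEdge) : ℕ → ℕ → Prop := Relation.ReflTransGen (adjL E)
def connL (V : Finset ℕ) (E : Finset LEdge) : Prop := ∀ u ∈ V, ∀ v ∈ V, reachL E u v
def IsLTree (V : Finset ℕ) (T : Finset LEdge) : Prop := connL V T ∧ T.card + 1 = V.card

def extActiveL (T : Finset LEdge) (ω : LEdge → ℝ) (e : LEdge) : Prop :=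
  e ∉ T ∧ reachL T e.1.1 e.1.2 ∧ ∀ e' ∈ T, ¬ reachL (T.erase e') e.1.1 e.1.2 → ω e < ω e'

def eaL (E T : Finset LEdge) (ω : LEdge → ℝ) : ℕ := (E.filter (extActiveL T ω)).card

def omega1 (N : ℕ) (e : PEdge) : ℝ := (e.1 : ℝ) + (e.2 : ℝ) / (N : ℝ)
def omega2 (N : ℕ) (e : PEdge) : ℝ := ((N + 1 - e.2 : ℕ) : ℝ) + ((N + 1 - e.1 : ℕ) : ℝ) / (N : ℝ)
def omegaLex (n : ℕ) (e : PEdge) : ℝ := ((e.1 * (n + 1) + e.2 : ℕ) : ℝ)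

/-- representative (minimum) of the component of `x` in the forest `F` on vertex set `V`. -/
def rep (V : Finset ℕ) (F : Finset LEdge) (x : ℕ) : ℕ :=
  if hx : x ∈ V then
    (V.filter fun y => reachL F x y).min'
      ⟨x, Finset.mem_filter.mpr ⟨hx, Relation.ReflTransGen.refl⟩⟩
  else x

/-- image of an edge in the quotient graph `G • F`; the label encodes the original edge. -/
def quotEdge (ρ : ℕ → ℕ) (e : LEdge) : LEdge :=
  ((ρ e.1.1, ρ e.1.2), Nat.pair (Nat.pair e.1.1 e.1.2) e.2)

/-- recover the original edge from a quotient edge. -/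
def decodeE (e : LEdge) : LEdge :=
  (((Nat.unpair (Nat.unpair e.2).1).1, (Nat.unpair (Nat.unpair e.2).1).2), (Nat.unpair e.2).2)

/-- tiering map on `[n]` induced by `f : Fin n → Fin m` (tiers `1,...,m`). -/
def tf (n m : ℕ) (f : Fin n → Fin m) : ℕ → ℕ := fun v =>
  if h : v ∈ Finset.Icc 1 n then
    (f ⟨v - 1, by have := Finset.mem_Icc.mp h; omega⟩).1 + 1
  else 0

/-- `G` is a tiered graph with `m` tiers. -/
def IsTieredM (m : ℕ) (G : PreGraph) : Prop :=
  (∀ e ∈ G.E, e.1 ∈ G.V ∧ e.2 ∈ G.V ∧ e.1 < e.2) ∧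
  (∀ v ∈ G.V, G.t v ∈ Finset.Icc 1 m) ∧
  (∀ e ∈ G.E, G.t e.1 < G.t e.2) ∧
  (∀ i ∈ Finset.Icc 1 m, ∃ v ∈ G.V, G.t v = i)

/-- weight polynomial `P_p(q)` (recursive weight), evaluated at `q`. -/
def Pw (n m : ℕ) (p : ℕ → ℕ) (q : ℤ) : ℤ :=
  ∑ f : Fin n → Fin m,
    ∑ E ∈ ((Finset.Icc 1 n ×ˢ Finset.Icc 1 n).powerset.filter fun E =>
        IsTreeG ⟨Finset.Icc 1 n, E, tf n m f⟩ ∧ IsTieredM m ⟨Finset.Icc 1 n, E, tf n m f⟩ ∧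
        ∀ i ∈ Finset.Icc 1 m, ((Finset.Icc 1 n).filter fun v => tf n m f v = i).card = p i),
      q ^ weight ⟨Finset.Icc 1 n, E, tf n m f⟩

/-- weight polynomial `P_p(q)` with the weight of a tiered tree given by its external
activity in the complete tiered graph it determines (lexicographic edge order). -/
def PwEA (n m : ℕ) (p : ℕ → ℕ) (q : ℤ) : ℤ :=
  ∑ f : Fin n → Fin m,
    ∑ E ∈ ((Finset.Icc 1 n ×ˢ Finset.Icc 1 n).powerset.filter fun E =>
        IsTreeG ⟨Finset.Icc 1 n, E, tf n m f⟩ ∧ IsTieredM m ⟨Finset.Icc 1 n, E, tf n m f⟩ ∧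
        ∀ i ∈ Finset.Icc 1 m, ((Finset.Icc 1 n).filter fun v => tf n m f v = i).card = p i),
      q ^ eaP (ctEM n (tf n m f)) E (omegaLex n)

/-- `T^c_G(y)`: the Tutte evaluation `T_G(1,y)` (spanning tree expansion) for a connected
graph, `0` otherwise. -/
def TcP (V : Finset ℕ) (E : Finset PEdge) (ω : PEdge → ℝ) (y : ℤ) : ℤ :=
  if connP V E then ∑ T ∈ E.powerset.filter (fun T => IsTreeOn V T), y ^ eaP E T ω else 0

/-- edge multiset of `H ∪ Q_S`: `H`-edges (labels `≠ 0`) together with the complete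
tiered graph on `U` with tier-1 set `S` (labelled `0`). -/
def qE (U : Finset ℕ) (EH : Finset LEdge) (S : Finset ℕ) : Finset LEdge :=
  EH ∪ (ctE2 S (U \ S)).image fun p => (p, 0)

/-- `(S,T) ↦ (S*, T*)`: the dual quasi-tiered tree. -/
def dualTree (U : Finset ℕ) (ST : Finset ℕ × Finset LEdge) : Finset ℕ × Finset LEdge :=
  (U.filter fun v =>
      (cdual ⟨U, (ST.2.filter fun e => e.2 = 0).image Prod.fst,
        fun w => if w ∈ ST.1 then 1 else 2⟩).t v = 1,
   (ST.2.filter fun e => e.2 ≠ 0) ∪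
     (cdual ⟨U, (ST.2.filter fun e => e.2 = 0).image Prod.fst,
        fun w => if w ∈ ST.1 then 1 else 2⟩).E.image fun p => (p, 0))

/-- tiered forests on `U` with tier sizes `(p1, p2)` (tier map normalised off `U`). -/
def ForestSet (U : Finset ℕ) (p1 p2 : ℕ) : Set PreGraph :=
  {F | F.V = U ∧ IsTiered F ∧ IsForest F ∧
    (U.filter fun v => F.t v = 1).card = p1 ∧
    (U.filter fun v => F.t v = 2).card = p2 ∧
    ∀ v, v ∉ U → F.t v = 0}

instance (E : Finset PEdge) : Std.Symm (adjP E) := ⟨fun _ _ h => h.symm⟩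

lemma reachP_symm {E : Finset PEdge} {a b : ℕ} (h : reachP E a b) : reachP E b a :=
  Std.Symm.symm (r := Relation.ReflTransGen (adjP E)) a b h

section Components

variable {V : Finset ℕ} {E : Finset PEdge}

lemma comp_eq_of_reachP {a b : ℕ} (h : reachP E a b) : comp V E a = comp V E b := by
  ext z
  simp only [comp, mem_filter]
  exact and_congr_right fun _ => ⟨(reachP_symm h).trans, h.trans⟩

lemma reachP_of_mem_comp {x y : ℕ} (hy : y ∈ comp V E x) : reachP E x y :=
  (mem_filter.mp hy).2

lemma comp_eq_of_mem {x y : ℕ} (hy : y ∈ comp V E x) : comp V E y = comp V E x :=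
  (comp_eq_of_reachP (reachP_of_mem_comp hy)).symm

lemma mem_of_mem_comp {x y : ℕ} (hy : y ∈ comp V E x) : y ∈ V :=
  (mem_filter.mp hy).1

lemma mem_comp_self {x : ℕ} (hx : x ∈ V) : x ∈ comp V E x :=
  mem_filter.mpr ⟨hx, .refl⟩

end Components

section Flip

variable {V : Finset ℕ}

lemma flipMap_orderEmbOfFin (V : Finset ℕ) (i : Fin V.card) :
    flipMap V (V.orderEmbOfFin rfl i) = V.orderEmbOfFin rfl i.rev := by
  have hi : (⟨V.orderEmbOfFin rfl i, V.orderEmbOfFin_mem rfl i⟩ : V) = V.orderIsoOfFin rfl i :=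
    Subtype.ext (coe_orderIsoOfFin_apply V rfl i).symm
  rw [flipMap, dif_pos (V.orderEmbOfFin_mem rfl i), ← coe_orderIsoOfFin_apply V rfl i.rev]
  simp only [hi, OrderIso.symm_apply_apply]
  congr 2
  ext
  simp only [Fin.val_rev]
  omega

lemma exists_orderEmbOfFin_eq {x : ℕ} (hx : x ∈ V) : ∃ i, V.orderEmbOfFin rfl i = x := by
  rwa [← Set.mem_range, range_orderEmbOfFin]

lemma flipMap_mem {x : ℕ} (hx : x ∈ V) : flipMap V x ∈ V := by
  obtain ⟨i, rfl⟩ := exists_orderEmbOfFin_eq hx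
  rw [flipMap_orderEmbOfFin]
  exact V.orderEmbOfFin_mem rfl _

lemma flipMap_flipMap {x : ℕ} (hx : x ∈ V) : flipMap V (flipMap V x) = x := by
  obtain ⟨i, rfl⟩ := exists_orderEmbOfFin_eq hx
  rw [flipMap_orderEmbOfFin, flipMap_orderEmbOfFin, Fin.rev_rev]

lemma strictAntiOn_flipMap (V : Finset ℕ) : StrictAntiOn (flipMap V) V := by
  intro x hx y hy hxy
  obtain ⟨i, rfl⟩ := exists_orderEmbOfFin_eq hx
  obtain ⟨j, rfl⟩ := exists_orderEmbOfFin_eq hy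
  rw [flipMap_orderEmbOfFin, flipMap_orderEmbOfFin, OrderEmbedding.lt_iff_lt, Fin.rev_lt_rev]
  exact (V.orderEmbOfFin rfl).lt_iff_lt.mp hxy

end Flip

def compFlip (V : Finset ℕ) (E : Finset PEdge) (y : ℕ) : ℕ := flipMap (comp V E y) y

section CompFlip

variable {V : Finset ℕ} {E : Finset PEdge}

lemma compFlip_eq_of_mem_comp {x y : ℕ} (hy : y ∈ comp V E x) :
    compFlip V E y = flipMap (comp V E x) y := by
  rw [compFlip, comp_eq_of_mem hy]

lemma compFlip_mem_comp {y : ℕ} (hy : y ∈ V) : compFlip V E y ∈ comp V E y :=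
  flipMap_mem (mem_comp_self hy)

lemma compFlip_compFlip {y : ℕ} (hy : y ∈ V) : compFlip V E (compFlip V E y) = y := by
  have hyC := mem_comp_self (E := E) hy
  rw [compFlip_eq_of_mem_comp (compFlip_mem_comp hy), compFlip, flipMap_flipMap hyC]

lemma injOn_compFlip : Set.InjOn (compFlip V E) V := fun a ha b hb hab => by
  rw [← compFlip_compFlip ha, hab, compFlip_compFlip hb]

lemma compFlip_lt_compFlip_iff {a b : ℕ} (ha : a ∈ V) (hb : b ∈ V) (hab : reachP E a b) :
    compFlip V E b < compFlip V E a ↔ a < b := by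
  have hbC : b ∈ comp V E a := mem_filter.mpr ⟨hb, hab⟩
  rw [compFlip_eq_of_mem_comp hbC, compFlip]
  exact (strictAntiOn_flipMap _).lt_iff_gt hbC (mem_comp_self ha)

end CompFlip

section Dual

variable {G : PreGraph}

lemma cdual_E_eq (G : PreGraph) :
    (cdual G).E = G.E.image fun e => (compFlip G.V G.E e.2, compFlip G.V G.E e.1) := by
  refine image_congr fun e he => ?_
  rw [compFlip, compFlip, ← comp_eq_of_reachP (.single (Or.inl he))]

lemma cdual_t_compFlip {y : ℕ} (hy : y ∈ G.V) :
    (cdual G).t (compFlip G.V G.E y) = 3 - G.t y := by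
  have hfy := mem_of_mem_comp (compFlip_mem_comp (E := G.E) hy)
  simp only [cdual, if_pos hfy]
  rw [← compFlip, compFlip_compFlip hy]

lemma mem_ctE_iff {u v : ℕ} :
    (u, v) ∈ ctE G ↔ ((u ∈ G.V ∧ G.t u = 1) ∧ v ∈ G.V ∧ G.t v = 2) ∧ u < v := by
  simp only [ctE, ctE2, mem_filter, mem_product]

lemma mem_ctE_cdual_iff (ht : ∀ w ∈ G.V, G.t w = 1 ∨ G.t w = 2) {u v : ℕ}
    (hu : u ∈ G.V) (hv : v ∈ G.V) (huv : reachP G.E u v) :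
    (compFlip G.V G.E v, compFlip G.V G.E u) ∈ ctE (cdual G) ↔ (u, v) ∈ ctE G := by
  have hfu := mem_of_mem_comp (compFlip_mem_comp (E := G.E) hu)
  have hfv := mem_of_mem_comp (compFlip_mem_comp (E := G.E) hv)
  have htu := ht u hu
  have htv := ht v hv
  simp only [mem_ctE_iff, cdual_t_compFlip hu, cdual_t_compFlip hv,
    compFlip_lt_compFlip_iff hu hv huv]
  simp only [cdual, hfu, hfv, hu, hv, true_and]
  omega

lemma mem_cdual_E_iff (hE : ∀ e ∈ G.E, e.1 ∈ G.V ∧ e.2 ∈ G.V) {u v : ℕ}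
    (hu : u ∈ G.V) (hv : v ∈ G.V) :
    (compFlip G.V G.E v, compFlip G.V G.E u) ∈ (cdual G).E ↔ (u, v) ∈ G.E := by
  rw [cdual_E_eq, mem_image]
  constructor
  · rintro ⟨⟨a, b⟩, hab, heq⟩
    obtain ⟨hbu, hav⟩ := Prod.mk.inj (by simpa using heq)
    obtain ⟨ha, hb⟩ : a ∈ G.V ∧ b ∈ G.V := hE _ hab
    rwa [injOn_compFlip ha hu hav, injOn_compFlip hb hv hbu] at hab
  · exact fun h => ⟨(u, v), h, rfl⟩

end Dual

theorem stmt11_general (F : PreGraph) (hT : IsTiered F)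
    (x : ℕ)
    (u v : ℕ) (hu : u ∈ comp F.V F.E x) (hv : v ∈ comp F.V F.E x) :
    ((u, v) ∈ ctE F ∧ (u, v) ∉ F.E) ↔
      ((flipMap (comp F.V F.E x) v, flipMap (comp F.V F.E x) u) ∈ ctE (cdual F) ∧
        (flipMap (comp F.V F.E x) v, flipMap (comp F.V F.E x) u) ∉ (cdual F).E) := by
  obtain ⟨-, hE, ht, -⟩ := hT
  have huV := mem_of_mem_comp hu
  have hvV := mem_of_mem_comp hv
  have huv : reachP F.E u v := (reachP_symm (reachP_of_mem_comp hu)).trans (reachP_of_mem_comp hv)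
  rw [← compFlip_eq_of_mem_comp hu, ← compFlip_eq_of_mem_comp hv,
    mem_ctE_cdual_iff ht huV hvV huv,
    mem_cdual_E_iff (fun e he => ⟨(hE e he).1, (hE e he).2.1⟩) huV hvV]

/-- for vertices `u < v` of a component `C` of a tiered forest `F`
(`C` is the component of some `x ∈ V(F)`), the edge `uv` lies in `E(CT(F)) \ E(F₁)`
iff the flipped edge (`x_i ↦ x_{r+1-i}` within `C`) lies in `E(CT(F')) \ E(F'₁)`. -/
theorem stmt11 (F : PreGraph) (hT : IsTiered F) (hF : IsForest F)
    (x : ℕ) (hx : x ∈ F.V)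
    (u v : ℕ) (hu : u ∈ comp F.V F.E x) (hv : v ∈ comp F.V F.E x) (huv : u < v) :
    ((u, v) ∈ ctE F ∧ (u, v) ∉ F.E) ↔
      ((flipMap (comp F.V F.E x) v, flipMap (comp F.V F.E x) u) ∈ ctE (cdual F) ∧
        (flipMap (comp F.V F.E x) v, flipMap (comp F.V F.E x) u) ∉ (cdual F).E) :=
  stmt11_general F hT x u v hu hv

end
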